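/- Let R be a Noetherian local domain and let {J_n} be a discrete valued filtration, J_n = I(ν_1)_{⌈n a_1⌉} ∩ ⋯ ∩ I(ν_r)_{⌈n a_r⌉}, where ν_1, …, ν_r are discrete valuations nonnegative on R and a_i ∈ ℝ_{>0}. Suppose some ν_i has center m_R on R (i.e., m_{ν_i} ∩ R = m_R). Let c = max over those i with center m_R of ⌈a_i⌉. Then (J_n : m_R^∞) ∩ m_R^{cn} ⊆ J_n for all n ≥ 1; that is, {J_n} satisfies property A(c). -/

import Mathlib

/-!
If `ν_i` has center `m_R`, then `m_R^{cn} ⊆ I(ν_i)_{cn} ⊆ I(ν_i)_{⌈n a_i⌉}` because `c ≥ a_i`.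
Otherwise `I(ν_i)_1` is a proper subideal of `m_R`, so some `y ∈ m_R` is a `ν_i`-unit; if
`x ∈ (J_n : m_R^∞)` then `x yᵏ ∈ J_n` for some `k`, and `ν_i(x) = ν_i(x yᵏ) ≥ ⌈n a_i⌉`.
-/

/-- The valuation ideal `I(ν)_n = {f ∈ R : ν(f) ≥ n}` of a (discrete, additive) valuation
`ν` on the fraction field which is nonnegative on `R`. -/
noncomputable def valIdeal {R K : Type*} [CommRing R] [Field K] [Algebra R K]
    (ν : AddValuation K (WithTop ℤ)) (hν : ∀ r : R, 0 ≤ ν (algebraMap R K r)) (n : ℤ) :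
    Ideal R where
  carrier := {f : R | (n : WithTop ℤ) ≤ ν (algebraMap R K f)}
  zero_mem' := by
    simp only [Set.mem_setOf_eq, map_zero, AddValuation.map_zero]
    exact le_top
  add_mem' := by
    intro a b ha hb
    simp only [Set.mem_setOf_eq, map_add] at *
    exact le_trans (le_min ha hb) (ν.map_add _ _)
  smul_mem' := by
    intro c f hf
    simp only [Set.mem_setOf_eq, smul_eq_mul, map_mul, AddValuation.map_mul] at *
    calc (n : WithTop ℤ) = 0 + n := (zero_add _).symm
    _ ≤ ν (algebraMap R K c) + ν (algebraMap R K f) := add_le_add (hν c) hf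

/-- The saturation `I : J^∞ = ⋃ₖ (I : Jᵏ)`. -/
noncomputable def sat {A : Type*} [CommRing A] (I J : Ideal A) : Ideal A :=
  ⨆ n : ℕ, Submodule.colon I (((J ^ n : Ideal A)) : Set A)

lemma exists_pow_mul_mem_of_mem_sat {A : Type*} [CommRing A] {I J : Ideal A} {x : A}
    (hx : x ∈ sat I J) {y : A} (hy : y ∈ J) : ∃ k : ℕ, x * y ^ k ∈ I := by
  have hmono : Monotone fun k : ℕ => Submodule.colon I ((J ^ k : Ideal A) : Set A) :=
    fun k l hkl => Submodule.colon_mono le_rfl (Ideal.pow_le_pow_right hkl)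
  obtain ⟨k, hk⟩ := (Submodule.mem_iSup_of_directed _ hmono.directed_le).1 hx
  exact ⟨k, Submodule.mem_colon.1 hk _ (Ideal.pow_mem_pow hy k)⟩

section valIdeal

variable {R K : Type*} [CommRing R] [Field K] [Algebra R K]
  {ν : AddValuation K (WithTop ℤ)} {hν : ∀ r : R, 0 ≤ ν (algebraMap R K r)}

lemma mem_valIdeal_iff {n : ℤ} {f : R} :
    f ∈ valIdeal ν hν n ↔ (n : WithTop ℤ) ≤ ν (algebraMap R K f) := Iff.rfl

lemma valIdeal_antitone {m n : ℤ} (h : m ≤ n) : valIdeal ν hν n ≤ valIdeal ν hν m :=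
  fun _ hf => mem_valIdeal_iff.2 <| le_trans (by exact_mod_cast h) (mem_valIdeal_iff.1 hf)

lemma valIdeal_one_pow_le (k : ℕ) : valIdeal ν hν 1 ^ k ≤ valIdeal ν hν k := by
  induction k with
  | zero => exact fun f _ => by simpa [mem_valIdeal_iff] using hν f
  | succ k ih =>
    rw [pow_succ]
    refine Ideal.mul_le.2 fun x hx y hy => ?_
    rw [mem_valIdeal_iff, map_mul, AddValuation.map_mul, Nat.cast_succ, WithTop.coe_add]
    exact add_le_add (ih hx) hy

lemma valIdeal_one_ne_top : valIdeal ν hν 1 ≠ ⊤ := by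
  rw [Ne, Ideal.eq_top_iff_one, mem_valIdeal_iff, map_one, AddValuation.map_one]
  exact_mod_cast (by decide : ¬ (1 : ℤ) ≤ 0)

lemma mem_valIdeal_of_mul_mem {n : ℤ} {x y : R} (hy : ν (algebraMap R K y) = 0)
    (hxy : x * y ∈ valIdeal ν hν n) : x ∈ valIdeal ν hν n := by
  rwa [mem_valIdeal_iff, map_mul, AddValuation.map_mul, hy, add_zero] at hxy

variable [IsLocalRing R]

lemma exists_mem_maximalIdeal_valuation_eq_zero
    (hcenter : valIdeal ν hν 1 ≠ IsLocalRing.maximalIdeal R) :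
    ∃ y ∈ IsLocalRing.maximalIdeal R, ν (algebraMap R K y) = 0 := by
  obtain ⟨y, hym, hyν⟩ := SetLike.exists_of_lt
    (lt_of_le_of_ne (IsLocalRing.le_maximalIdeal valIdeal_one_ne_top) hcenter)
  refine ⟨y, hym, le_antisymm ?_ (hν y)⟩
  rw [mem_valIdeal_iff, not_le] at hyν
  obtain ⟨m, hm⟩ := WithTop.ne_top_iff_exists.1 hyν.ne_top
  have hm0 : (0 : ℤ) ≤ m := by exact_mod_cast hm ▸ hν y
  have hm1 : m < 1 := by exact_mod_cast hm ▸ hyν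
  rw [← hm]
  exact_mod_cast (by omega : m ≤ 0)

lemma sat_le_valIdeal (hcenter : valIdeal ν hν 1 ≠ IsLocalRing.maximalIdeal R)
    {I : Ideal R} {n : ℤ} (hI : I ≤ valIdeal ν hν n) :
    sat I (IsLocalRing.maximalIdeal R) ≤ valIdeal ν hν n := by
  intro x hx
  obtain ⟨y, hym, hy⟩ := exists_mem_maximalIdeal_valuation_eq_zero hcenter
  obtain ⟨k, hk⟩ := exists_pow_mul_mem_of_mem_sat hx hym
  exact mem_valIdeal_of_mul_mem (by rw [map_pow, AddValuation.map_pow, hy, nsmul_zero]) (hI hk)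

lemma maximalIdeal_pow_le_valIdeal (hcenter : valIdeal ν hν 1 = IsLocalRing.maximalIdeal R)
    {k : ℕ} {n : ℤ} (hn : n ≤ k) : IsLocalRing.maximalIdeal R ^ k ≤ valIdeal ν hν n :=
  hcenter ▸ (valIdeal_one_pow_le k).trans (valIdeal_antitone hn)

end valIdeal

lemma ceil_natCast_mul_le {a : ℝ} {c : ℕ} (hc : ⌈a⌉₊ ≤ c) (n : ℕ) :
    ⌈(n : ℝ) * a⌉ ≤ ((c * n : ℕ) : ℤ) := by
  rw [Int.ceil_le, Int.cast_natCast, Nat.cast_mul, mul_comm (c : ℝ)]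
  exact mul_le_mul_of_nonneg_left ((Nat.le_ceil a).trans (by exact_mod_cast hc)) n.cast_nonneg

open Classical in
theorem stmt15_general {R K : Type*} [CommRing R] [IsLocalRing R]
    [Field K] [Algebra R K]
    (r : ℕ) (ν : Fin r → AddValuation K (WithTop ℤ))
    (hν : ∀ i, ∀ x : R, 0 ≤ (ν i) (algebraMap R K x))
    (a : Fin r → ℝ)
    (J : ℕ → Ideal R)
    (hJ : ∀ n, J n = ⨅ i : Fin r, valIdeal (ν i) (hν i) ⌈(n : ℝ) * a i⌉)
    (c : ℕ)
    (hc : c = (Finset.univ.filter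
        (fun i : Fin r => valIdeal (ν i) (hν i) 1 = IsLocalRing.maximalIdeal R)).sup
      (fun i => ⌈a i⌉₊)) :
    ∀ n, 1 ≤ n →
      sat (J n) (IsLocalRing.maximalIdeal R) ⊓ (IsLocalRing.maximalIdeal R) ^ (c * n)
        ≤ J n := by
  intro n _ x ⟨hsat, hpow⟩
  rw [hJ, Ideal.mem_iInf]
  intro i
  by_cases hi : valIdeal (ν i) (hν i) 1 = IsLocalRing.maximalIdeal R
  · have hac : ⌈a i⌉₊ ≤ c :=
      hc ▸ Finset.le_sup (f := fun j => ⌈a j⌉₊) (Finset.mem_filter.2 ⟨Finset.mem_univ i, hi⟩)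
    exact maximalIdeal_pow_le_valIdeal hi (ceil_natCast_mul_le hac n) hpow
  · exact sat_le_valIdeal hi (hJ n ▸ iInf_le _ i) hsat

open Classical in
/-- let `R` be a Noetherian local domain and `{J_n}` a discrete valued
filtration `J_n = I(ν₁)_{⌈n a₁⌉} ∩ ⋯ ∩ I(ν_r)_{⌈n a_r⌉}`, with some `ν_i` having center
`m_R` on `R`.  With `c` the maximum of `⌈a_i⌉` over the `i` whose center is `m_R`, one
has `(J_n : m_R^∞) ∩ m_R^{cn} ⊆ J_n` for all `n ≥ 1`; i.e. `{J_n}` satisfies `A(c)`. -/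
theorem stmt15 {R K : Type*} [CommRing R] [IsDomain R] [IsNoetherianRing R] [IsLocalRing R]
    [Field K] [Algebra R K] [IsFractionRing R K]
    (r : ℕ) (ν : Fin r → AddValuation K (WithTop ℤ))
    (hν : ∀ i, ∀ x : R, 0 ≤ (ν i) (algebraMap R K x))
    (a : Fin r → ℝ) (ha : ∀ i, 0 < a i)
    (hcenter : ∃ i, valIdeal (ν i) (hν i) 1 = IsLocalRing.maximalIdeal R)
    (J : ℕ → Ideal R)
    (hJ : ∀ n, J n = ⨅ i : Fin r, valIdeal (ν i) (hν i) ⌈(n : ℝ) * a i⌉)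
    (c : ℕ)
    (hc : c = (Finset.univ.filter
        (fun i : Fin r => valIdeal (ν i) (hν i) 1 = IsLocalRing.maximalIdeal R)).sup
      (fun i => ⌈a i⌉₊)) :
    ∀ n, 1 ≤ n →
      sat (J n) (IsLocalRing.maximalIdeal R) ⊓ (IsLocalRing.maximalIdeal R) ^ (c * n)
        ≤ J n :=
  stmt15_general r ν hν a J hJ c hc
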